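/- arXiv:1205.4540 — 3 statements merged into one kernel-verified Lean document; each statement's English description precedes it below -/
import Mathlib

section
/- If f is a continuous map from the closed unit ball of ℝⁿ to itself with f(x) ≠ x for every x, then there exists a continuous map g from the closed unit ball to the unit sphere of ℝⁿ whose restriction to the unit sphere is the identity; namely, g(x) is the unique point of the unit sphere lying on the ray that starts at f(x) and passes through x. -/
open RealInnerProductSpace


/-- If `f` is a continuous self-map of the closed unit ball of `ℝⁿ` with no fixed
point, then the map sending `x` to the unique point of the unit sphere lying on the
ray starting at `f x` and passing through `x` is a continuous map from the closed
unit ball to the unit sphere restricting to the identity on the unit sphere. -/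
theorem retraction_of_no_fixed_point (n : ℕ)
    (f : EuclideanSpace ℝ (Fin n) → EuclideanSpace ℝ (Fin n))
    (hf : ContinuousOn f (Metric.closedBall 0 1))
    (hmaps : Set.MapsTo f (Metric.closedBall 0 1) (Metric.closedBall 0 1))
    (hne : ∀ x ∈ Metric.closedBall (0 : EuclideanSpace ℝ (Fin n)) 1, f x ≠ x) :
    ∃ g : EuclideanSpace ℝ (Fin n) → EuclideanSpace ℝ (Fin n),
      ContinuousOn g (Metric.closedBall 0 1) ∧
      (∀ x ∈ Metric.closedBall (0 : EuclideanSpace ℝ (Fin n)) 1,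
        g x ∈ Metric.sphere (0 : EuclideanSpace ℝ (Fin n)) 1) ∧
      (∀ x ∈ Metric.sphere (0 : EuclideanSpace ℝ (Fin n)) 1, g x = x) ∧
      -- `g x` is the unique point of the sphere on the ray from `f x` through `x`:
      (∀ x ∈ Metric.closedBall (0 : EuclideanSpace ℝ (Fin n)) 1,
        (∃ t : ℝ, 1 ≤ t ∧ g x = f x + t • (x - f x)) ∧
        (∀ s : ℝ, 1 ≤ s → f x + s • (x - f x) ∈ Metric.sphere (0 : EuclideanSpace ℝ (Fin n)) 1 →
          f x + s • (x - f x) = g x)) := by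
  set c : EuclideanSpace ℝ (Fin n) → ℝ := fun x => ⟪f x, x - f x⟫ with hc
  set V : EuclideanSpace ℝ (Fin n) → ℝ := fun x => ‖x - f x‖ ^ 2 with hV
  set D : EuclideanSpace ℝ (Fin n) → ℝ := fun x => c x ^ 2 + V x * (1 - ‖f x‖ ^ 2) with hD
  set t : EuclideanSpace ℝ (Fin n) → ℝ := fun x => (-(c x) + Real.sqrt (D x)) / V x with ht
  have hVpos : ∀ x ∈ Metric.closedBall (0 : EuclideanSpace ℝ (Fin n)) 1, 0 < V x := by
    intro x hx
    have h : x - f x ≠ 0 := sub_ne_zero.mpr (Ne.symm (hne x hx))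
    exact pow_pos (norm_pos_iff.mpr h) 2
  have hA : ∀ x ∈ Metric.closedBall (0 : EuclideanSpace ℝ (Fin n)) 1, ‖f x‖ ≤ 1 := by
    intro x hx
    simpa [mem_closedBall_zero_iff] using hmaps hx
  have hA2 : ∀ x ∈ Metric.closedBall (0 : EuclideanSpace ℝ (Fin n)) 1, ‖f x‖ ^ 2 ≤ 1 := by
    intro x hx
    nlinarith [hA x hx, norm_nonneg (f x)]
  have hDnn : ∀ x ∈ Metric.closedBall (0 : EuclideanSpace ℝ (Fin n)) 1, 0 ≤ D x := by
    intro x hx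
    have h2 : (0:ℝ) ≤ V x := (hVpos x hx).le
    have h4 : (0:ℝ) ≤ 1 - ‖f x‖ ^ 2 := by linarith [hA2 x hx]
    have : (0:ℝ) ≤ c x ^ 2 + V x * (1 - ‖f x‖ ^ 2) :=
      add_nonneg (sq_nonneg _) (mul_nonneg h2 h4)
    simpa [hD] using this
  have hxid : ∀ x : EuclideanSpace ℝ (Fin n), f x + (x - f x) = x := by
    intro x; abel
  have hx2 : ∀ x : EuclideanSpace ℝ (Fin n), ‖x‖ ^ 2 = ‖f x‖ ^ 2 + 2 * c x + V x := by
    intro x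
    have h := norm_add_sq_real (f x) (x - f x)
    rw [hxid x] at h
    simp only [hc, hV]
    linarith
  have hnorm : ∀ (x : EuclideanSpace ℝ (Fin n)) (s : ℝ),
      ‖f x + s • (x - f x)‖ ^ 2 = ‖f x‖ ^ 2 + 2 * c x * s + V x * s ^ 2 := by
    intro x s
    simp only [hc, hV]
    rw [norm_add_sq_real, real_inner_smul_right, norm_smul, mul_pow, Real.norm_eq_abs, sq_abs]
    ring
  have ht1 : ∀ x ∈ Metric.closedBall (0 : EuclideanSpace ℝ (Fin n)) 1, 1 ≤ t x := by
    intro x hx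
    rw [ht]
    rw [le_div_iff₀ (hVpos x hx), one_mul]
    have hxn : ‖x‖ ^ 2 ≤ 1 := by
      have := mem_closedBall_zero_iff.mp hx
      nlinarith [norm_nonneg x]
    have hquad := hx2 x
    rcases le_or_gt (V x + c x) 0 with h | h
    · have := Real.sqrt_nonneg (D x); linarith
    · have : V x + c x ≤ Real.sqrt (D x) := by
        rw [Real.le_sqrt h.le]
        have hdd : D x = c x ^ 2 + V x * (1 - ‖f x‖ ^ 2) := by rw [hD]
        nlinarith [mul_nonneg (hVpos x hx).le (by linarith : (0:ℝ) ≤ 1 - ‖x‖ ^ 2)]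
        exact hDnn x hx
      linarith
  have hroot : ∀ x ∈ Metric.closedBall (0 : EuclideanSpace ℝ (Fin n)) 1,
      V x * t x ^ 2 + 2 * c x * t x + (‖f x‖ ^ 2 - 1) = 0 := by
    intro x hx
    have hVne : V x ≠ 0 := (hVpos x hx).ne'
    have h1 : t x * V x = -(c x) + Real.sqrt (D x) := by
      rw [ht]; exact div_mul_cancel₀ _ hVne
    have h2 : Real.sqrt (D x) ^ 2 = c x ^ 2 + V x * (1 - ‖f x‖ ^ 2) := by
      rw [Real.sq_sqrt (hDnn x hx), hD]
    have key : V x * (V x * t x ^ 2 + 2 * c x * t x + (‖f x‖ ^ 2 - 1)) = 0 := by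
      linear_combination (t x * V x + c x + Real.sqrt (D x)) * h1 + h2
    rcases mul_eq_zero.mp key with h | h
    · exact absurd h hVne
    · exact h
  have hgs : ∀ x ∈ Metric.closedBall (0 : EuclideanSpace ℝ (Fin n)) 1,
      ‖f x + t x • (x - f x)‖ = 1 := by
    intro x hx
    have h1 := hnorm x (t x)
    have h2 := hroot x hx
    have h3 : ‖f x + t x • (x - f x)‖ ^ 2 = 1 := by linarith
    have h4 : (0:ℝ) ≤ ‖f x + t x • (x - f x)‖ := norm_nonneg _
    have h5 : (‖f x + t x • (x - f x)‖ - 1) * (‖f x + t x • (x - f x)‖ + 1) = 0 := by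
      linear_combination h3
    rcases mul_eq_zero.mp h5 with h | h
    · linarith
    · linarith
  have huniq : ∀ x ∈ Metric.closedBall (0 : EuclideanSpace ℝ (Fin n)) 1,
      ∀ s : ℝ, 1 ≤ s → ‖f x + s • (x - f x)‖ = 1 → s = t x := by
    intro x hx s hs hsn
    have es : V x * s ^ 2 + 2 * c x * s + (‖f x‖ ^ 2 - 1) = 0 := by
      have h := hnorm x s
      rw [hsn] at h
      linarith
    have et := hroot x hx
    by_contra hne'
    have hfac : (s - t x) * (V x * (s + t x) + 2 * c x) = 0 := by
      linear_combination es - et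
    have hst : V x * (s + t x) + 2 * c x = 0 := by
      rcases mul_eq_zero.mp hfac with h | h
      · exact absurd (by linarith [sub_eq_zero.mp h] : s = t x) hne'
      · exact h
    have ht1x := ht1 x hx
    have hVx := hVpos x hx
    have h6 : V x * (s * t x) = ‖f x‖ ^ 2 - 1 := by
      linear_combination s * hst - es
    have h7 : (0:ℝ) < V x * (s * t x) :=
      mul_pos hVx (by nlinarith : (0:ℝ) < s * t x)
    linarith [hA2 x hx]
  refine ⟨fun x => f x + t x • (x - f x), ?_, ?_, ?_, ?_⟩
  · have hid : ContinuousOn (fun x : EuclideanSpace ℝ (Fin n) => x)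
        (Metric.closedBall 0 1) := continuousOn_id
    have hsub : ContinuousOn (fun x : EuclideanSpace ℝ (Fin n) => x - f x)
        (Metric.closedBall 0 1) := hid.sub hf
    have hcc : ContinuousOn c (Metric.closedBall 0 1) := hf.inner hsub
    have hVc : ContinuousOn V (Metric.closedBall 0 1) := hsub.norm.pow 2
    have hDc : ContinuousOn D (Metric.closedBall 0 1) :=
      (hcc.pow 2).add (hVc.mul (continuousOn_const.sub (hf.norm.pow 2)))
    have htc : ContinuousOn t (Metric.closedBall 0 1) :=
      (hcc.neg.add (Real.continuous_sqrt.comp_continuousOn hDc)).div hVc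
        (fun x hx => (hVpos x hx).ne')
    exact hf.add (htc.smul hsub)
  · intro x hx
    simpa [mem_sphere_zero_iff_norm] using hgs x hx
  · intro x hx
    have hx' : x ∈ Metric.closedBall (0 : EuclideanSpace ℝ (Fin n)) 1 :=
      Metric.sphere_subset_closedBall hx
    have h1 : ‖f x + (1:ℝ) • (x - f x)‖ = 1 := by
      rw [one_smul, hxid]; exact mem_sphere_zero_iff_norm.mp hx
    have h2 := huniq x hx' 1 le_rfl h1
    show f x + t x • (x - f x) = x
    rw [← h2, one_smul, hxid]
  · intro x hx
    refine ⟨⟨t x, ht1 x hx, rfl⟩, ?_⟩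
    intro s hs hsn
    show f x + s • (x - f x) = f x + t x • (x - f x)
    rw [huniq x hx s hs (mem_sphere_zero_iff_norm.mp hsn)]
end

section
/- Suppose that for every smooth (C^∞) map g from the unit sphere 𝕊ⁿ of ℝⁿ⁺¹ to ℝⁿ there exists x ∈ 𝕊ⁿ with g(x) = g(−x). Then for every continuous map f: 𝕊ⁿ → ℝⁿ there exists x ∈ 𝕊ⁿ with f(x) = f(−x). -/
open scoped BigOperators

/-- The subalgebra of continuous real functions on the sphere that are restrictions of
globally smooth functions. -/
noncomputable def smoothRestrictSubalg (n : ℕ) :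
    Subalgebra ℝ C(Metric.sphere (0 : EuclideanSpace ℝ (Fin (n + 1))) 1, ℝ) where
  carrier := {φ | ∃ g : EuclideanSpace ℝ (Fin (n + 1)) → ℝ,
      ContDiff ℝ (⊤ : ℕ∞) g ∧ ∀ x : Metric.sphere (0 : EuclideanSpace ℝ (Fin (n + 1))) 1,
        φ x = g x}
  mul_mem' := by
    rintro φ ψ ⟨g, hg, hgφ⟩ ⟨h, hh, hhψ⟩
    exact ⟨g * h, hg.mul hh, fun x => by simp [hgφ x, hhψ x]⟩
  add_mem' := by
    rintro φ ψ ⟨g, hg, hgφ⟩ ⟨h, hh, hhψ⟩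
    exact ⟨g + h, hg.add hh, fun x => by simp [hgφ x, hhψ x]⟩
  algebraMap_mem' r := ⟨fun _ => r, contDiff_const, fun _ => rfl⟩

theorem smoothRestrictSubalg_separates (n : ℕ) :
    (smoothRestrictSubalg n).SeparatesPoints := by
  intro x y hxy
  have hne : (x : EuclideanSpace ℝ (Fin (n + 1))) ≠ (y : EuclideanSpace ℝ (Fin (n + 1))) :=
    fun h => hxy (Subtype.ext h)
  obtain ⟨i, hi⟩ : ∃ i, (x : EuclideanSpace ℝ (Fin (n + 1))) i ≠
      (y : EuclideanSpace ℝ (Fin (n + 1))) i := by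
    by_contra h
    push_neg at h
    exact hne (PiLp.ext h)
  refine ⟨_, ⟨⟨fun z => (z : EuclideanSpace ℝ (Fin (n + 1))) i,
    ((EuclideanSpace.proj i : EuclideanSpace ℝ (Fin (n + 1)) →L[ℝ] ℝ).continuous).comp
      continuous_subtype_val⟩,
    ⟨fun v => (EuclideanSpace.proj i : EuclideanSpace ℝ (Fin (n + 1)) →L[ℝ] ℝ) v,
      (EuclideanSpace.proj i : EuclideanSpace ℝ (Fin (n + 1)) →L[ℝ] ℝ).contDiff,
      fun _ => rfl⟩, rfl⟩, hi⟩

/-- If the Borsuk–Ulam conclusion holds for every smooth (`C^∞`) map `g : 𝕊ⁿ → ℝⁿ`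
(where smooth means: `g` is `C^∞` on an open neighbourhood of `𝕊ⁿ` in `ℝⁿ⁺¹`),
then it holds for every continuous map `f : 𝕊ⁿ → ℝⁿ`. -/
theorem borsuk_ulam_of_smooth_borsuk_ulam (n : ℕ)
    (hsmooth : ∀ g : EuclideanSpace ℝ (Fin (n + 1)) → EuclideanSpace ℝ (Fin n),
      (∃ U : Set (EuclideanSpace ℝ (Fin (n + 1))), IsOpen U ∧
          Metric.sphere (0 : EuclideanSpace ℝ (Fin (n + 1))) 1 ⊆ U ∧
          ContDiffOn ℝ (⊤ : ℕ∞) g U) →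
      ∃ x ∈ Metric.sphere (0 : EuclideanSpace ℝ (Fin (n + 1))) 1, g x = g (-x))
    (f : EuclideanSpace ℝ (Fin (n + 1)) → EuclideanSpace ℝ (Fin n))
    (hf : ContinuousOn f (Metric.sphere 0 1)) :
    ∃ x ∈ Metric.sphere (0 : EuclideanSpace ℝ (Fin (n + 1))) 1, f x = f (-x) := by
  classical
  set S := Metric.sphere (0 : EuclideanSpace ℝ (Fin (n + 1))) 1 with hS
  by_contra hcon
  push_neg at hcon
  -- the map x ↦ ‖f x - f (-x)‖ is continuous and positive on the compact sphere
  have hnegS : ∀ x ∈ S, -x ∈ S := by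
    intro x hx
    simpa [hS] using hx
  have hcont : ContinuousOn (fun x : EuclideanSpace ℝ (Fin (n + 1)) => ‖f x - f (-x)‖) S := by
    apply ContinuousOn.norm
    have h2 : ContinuousOn (fun x : EuclideanSpace ℝ (Fin (n + 1)) => f (-x)) S :=
      hf.comp continuousOn_neg (fun x hx => hnegS x hx)
    exact hf.sub h2
  have hScompact : IsCompact S := isCompact_sphere 0 1
  have hSne : S.Nonempty := NormedSpace.sphere_nonempty.mpr zero_le_one
  obtain ⟨x₀, hx₀S, hx₀min⟩ := hScompact.exists_isMinOn hSne hcont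
  set ε : ℝ := ‖f x₀ - f (-x₀)‖ with hε
  have hεpos : 0 < ε := by
    rw [hε, norm_pos_iff, sub_ne_zero]
    exact hcon x₀ hx₀S
  -- approximation parameter
  set δ : ℝ := ε / (2 * (Real.sqrt n + 1)) with hδ
  have hsq : 0 < Real.sqrt n + 1 := by positivity
  have hδpos : 0 < δ := by positivity
  -- approximate each component of f by a smooth function
  have hfi : ∀ i : Fin n, ∃ g : EuclideanSpace ℝ (Fin (n + 1)) → ℝ, ContDiff ℝ (⊤ : ℕ∞) g ∧
      ∀ x : S, |f x i - g x| < δ := by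
    intro i
    have hci : Continuous fun x : S => f x i := by
      have : Continuous fun x : S => f x :=
        hf.restrict.comp continuous_id
      exact ((EuclideanSpace.proj i : EuclideanSpace ℝ (Fin n) →L[ℝ] ℝ).continuous).comp this
    obtain ⟨⟨g, hgA⟩, hgb⟩ :=
      ContinuousMap.exists_mem_subalgebra_near_continuous_of_separatesPoints
        (smoothRestrictSubalg n) (smoothRestrictSubalg_separates n)
        (fun x : S => f x i) hci δ hδpos
    obtain ⟨G, hGsmooth, hGg⟩ := hgA
    refine ⟨G, hGsmooth, fun x => ?_⟩
    have := hgb x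
    rw [hGg x] at this
    simpa [abs_sub_comm] using this
  choose g hg hgapprox using hfi
  -- assemble into a smooth map into ℝⁿ
  set G : EuclideanSpace ℝ (Fin (n + 1)) → EuclideanSpace ℝ (Fin n) :=
    fun v => (WithLp.equiv 2 (Fin n → ℝ)).symm (fun i => g i v) with hG
  have hGsmooth : ContDiff ℝ (⊤ : ℕ∞) G := by
    rw [contDiff_euclidean]
    intro i
    exact hg i
  have hGi : ∀ v i, G v i = g i v := fun _ _ => rfl
  obtain ⟨x, hxS, hGx⟩ := hsmooth G ⟨Set.univ, isOpen_univ, Set.subset_univ _,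
    hGsmooth.contDiffOn⟩
  -- each component of f x - f (-x) is small
  have hcomp : ∀ i : Fin n, |(f x - f (-x)) i| < 2 * δ := by
    intro i
    have h1 := hgapprox i ⟨x, hxS⟩
    have h2 := hgapprox i ⟨-x, hnegS x hxS⟩
    have hGeq : g i x = g i (-x) := by
      calc g i x = G x i := (hGi x i).symm
        _ = G (-x) i := by rw [hGx]
        _ = g i (-x) := hGi (-x) i
    have : (f x - f (-x)) i = (f x i - g i x) - (f (-x) i - g i (-x)) := by
      simp only [PiLp.sub_apply]
      rw [hGeq]; ring
    rw [this]
    calc |(f x i - g i x) - (f (-x) i - g i (-x))|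
        ≤ |f x i - g i x| + |f (-x) i - g i (-x)| := abs_sub _ _
      _ < δ + δ := by
          exact add_lt_add (by simpa using h1) (by simpa using h2)
      _ = 2 * δ := by ring
  -- hence the norm is small
  have hnorm : ‖f x - f (-x)‖ ≤ Real.sqrt n * (2 * δ) := by
    rw [EuclideanSpace.norm_eq]
    have hsum : ∑ i : Fin n, ‖(f x - f (-x)) i‖ ^ 2 ≤ (n : ℝ) * (2 * δ) ^ 2 := by
      calc ∑ i : Fin n, ‖(f x - f (-x)) i‖ ^ 2
          ≤ ∑ _i : Fin n, (2 * δ) ^ 2 := by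
            apply Finset.sum_le_sum
            intro i _
            have := (hcomp i).le
            have h0 : (0:ℝ) ≤ |(f x - f (-x)) i| := abs_nonneg _
            calc ‖(f x - f (-x)) i‖ ^ 2 = |(f x - f (-x)) i| ^ 2 := by
                  rw [Real.norm_eq_abs]
              _ ≤ (2 * δ) ^ 2 := by nlinarith
        _ = (n : ℝ) * (2 * δ) ^ 2 := by
            simp [Finset.sum_const, nsmul_eq_mul]
    calc Real.sqrt (∑ i : Fin n, ‖(f x - f (-x)) i‖ ^ 2)
        ≤ Real.sqrt ((n : ℝ) * (2 * δ) ^ 2) := Real.sqrt_le_sqrt hsum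
      _ = Real.sqrt n * (2 * δ) := by
          rw [Real.sqrt_mul (Nat.cast_nonneg n), Real.sqrt_sq (by positivity)]
  -- contradiction with minimality
  have hge : ε ≤ ‖f x - f (-x)‖ := hx₀min hxS
  have hlt : Real.sqrt n * (2 * δ) < ε := by
    have key : Real.sqrt n * (2 * δ) = ε * Real.sqrt n / (Real.sqrt n + 1) := by
      rw [hδ]; field_simp
    rw [key, div_lt_iff₀ hsq]
    nlinarith [Real.sqrt_nonneg (n : ℝ)]
  linarith
end

section
/- Let g = (g₁, g₂): ℝ → ℝ² be a smooth map with g₁(t)² + g₂(t)² = 1 for all t and g(t + 1/2) = −g(t) for all t (so in particular g is 1-periodic). Then there exists an odd integer k such that ∫₀¹ (g₁(t) g₂′(t) − g₂(t) g₁′(t)) dt = 2kπ; in particular this integral is nonzero. -/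
open Real

/-- If cos and sin agree, the angles differ by a multiple of `2π`. -/
lemma cos_sin_eq_aux (x y : ℝ) (hc : Real.cos x = Real.cos y)
    (hs : Real.sin x = Real.sin y) : ∃ n : ℤ, x = y + 2 * π * n := by
  have hexp : Complex.exp (x * Complex.I) = Complex.exp (y * Complex.I) := by
    rw [Complex.exp_mul_I, Complex.exp_mul_I, ← Complex.ofReal_cos, ← Complex.ofReal_cos,
      ← Complex.ofReal_sin, ← Complex.ofReal_sin, hc, hs]
  rw [Complex.exp_eq_exp_iff_exists_int] at hexp
  obtain ⟨n, hn⟩ := hexp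
  refine ⟨n, ?_⟩
  have h2 : ((x : ℂ)) * Complex.I = ((y : ℂ) + 2 * π * n) * Complex.I := by
    rw [hn]; ring
  have h3 := mul_right_cancel₀ Complex.I_ne_zero h2
  exact_mod_cast h3

/-- A continuous integer-valued function on `ℝ` is constant. -/
lemma const_of_int_valued (f : ℝ → ℝ) (hf : Continuous f)
    (h : ∀ t, ∃ n : ℤ, f t = n) : ∀ t, f t = f 0 := by
  have key : ∀ (t : ℝ) (m n : ℤ), f 0 = m → f t = n → m < n → False := by
    intro t m n hm hn hlt
    have hcmem : ((m : ℝ) + 1 / 2) ∈ Set.uIcc (f 0) (f t) := by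
      rw [hm, hn, Set.mem_uIcc]
      left
      have h1 : (m : ℝ) + 1 ≤ n := by exact_mod_cast Int.add_one_le_of_lt hlt
      constructor <;> linarith
    obtain ⟨s, _, hs⟩ := intermediate_value_uIcc (a := (0:ℝ)) (b := t) hf.continuousOn hcmem
    obtain ⟨p, hp⟩ := h s
    rw [hp] at hs
    have h1 : ((2 * (p - m) : ℤ) : ℝ) = 1 := by push_cast; linarith
    have h2 : (2 * (p - m) : ℤ) = 1 := by exact_mod_cast h1
    omega
  intro t
  by_contra hne
  obtain ⟨n, hn⟩ := h t
  obtain ⟨m, hm⟩ := h 0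
  rcases lt_trichotomy m n with hlt | heq | hgt
  · exact key t m n hm hn hlt
  · exact hne (by rw [hn, hm, heq])
  · have key' : ∀ (t : ℝ) (m n : ℤ), f t = m → f 0 = n → m < n → False := by
      intro t m n hm hn hlt
      have hcmem : ((m : ℝ) + 1 / 2) ∈ Set.uIcc (f 0) (f t) := by
        rw [hm, hn, Set.mem_uIcc]
        right
        have h1 : (m : ℝ) + 1 ≤ n := by exact_mod_cast Int.add_one_le_of_lt hlt
        constructor <;> linarith
      obtain ⟨s, _, hs⟩ := intermediate_value_uIcc (a := (0:ℝ)) (b := t) hf.continuousOn hcmem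
      obtain ⟨p, hp⟩ := h s
      rw [hp] at hs
      have h1 : ((2 * (p - m) : ℤ) : ℝ) = 1 := by push_cast; linarith
      have h2 : (2 * (p - m) : ℤ) = 1 := by exact_mod_cast h1
      omega
    exact key' t n m hn hm hgt

open Real in
/-- Let `g = (g₁, g₂) : ℝ → ℝ²` be a smooth curve on the unit circle with
`g (t + 1/2) = - g t` for all `t`. Then
`∫₀¹ (g₁ g₂' - g₂ g₁') dt = 2kπ` for some odd integer `k`; in particular this
integral is nonzero. -/
theorem integral_net_arclength_of_antiperiodic (g₁ g₂ : ℝ → ℝ)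
    (hg₁ : ContDiff ℝ (⊤ : ℕ∞) g₁) (hg₂ : ContDiff ℝ (⊤ : ℕ∞) g₂)
    (hcirc : ∀ t : ℝ, g₁ t ^ 2 + g₂ t ^ 2 = 1)
    (hanti : ∀ t : ℝ, g₁ (t + 1 / 2) = - g₁ t ∧ g₂ (t + 1 / 2) = - g₂ t) :
    (∃ k : ℤ, Odd k ∧
        (∫ t in (0 : ℝ)..1, (g₁ t * deriv g₂ t - g₂ t * deriv g₁ t)) = 2 * k * π) ∧
      (∫ t in (0 : ℝ)..1, (g₁ t * deriv g₂ t - g₂ t * deriv g₁ t)) ≠ 0 := by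
  set w : ℝ → ℝ := fun t => g₁ t * deriv g₂ t - g₂ t * deriv g₁ t with hwdef
  have hg₁' : ∀ t, HasDerivAt g₁ (deriv g₁ t) t :=
    fun t => (hg₁.differentiable (by simp) t).hasDerivAt
  have hg₂' : ∀ t, HasDerivAt g₂ (deriv g₂ t) t :=
    fun t => (hg₂.differentiable (by simp) t).hasDerivAt
  have hwcont : Continuous w :=
    (hg₁.continuous.mul (hg₂.continuous_deriv (by exact_mod_cast le_top))).sub
      (hg₂.continuous.mul (hg₁.continuous_deriv (by exact_mod_cast le_top)))
  -- orthogonality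
  have horth : ∀ t, g₁ t * deriv g₁ t + g₂ t * deriv g₂ t = 0 := by
    intro t
    have h1 : HasDerivAt (fun t => g₁ t ^ 2 + g₂ t ^ 2)
        (2 * g₁ t * deriv g₁ t + 2 * g₂ t * deriv g₂ t) t := by
      have := (((hg₁' t).fun_pow 2)).fun_add ((hg₂' t).fun_pow 2)
      refine this.congr_deriv ?_
      norm_num
    have h2 : (fun t => g₁ t ^ 2 + g₂ t ^ 2) = fun _ => (1 : ℝ) := funext hcirc
    rw [h2] at h1
    have := h1.unique (hasDerivAt_const t (1 : ℝ))
    linarith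
  -- starting angle
  set z : ℂ := (g₁ 0 : ℂ) + (g₂ 0 : ℂ) * Complex.I with hzdef
  have hzabs : ‖z‖ = 1 := by
    have : Complex.normSq z = 1 := by
      simp [hzdef, Complex.normSq_apply, Complex.add_re, Complex.add_im]
      have := hcirc 0; nlinarith
    rw [← Complex.sq_norm] at this
    nlinarith [norm_nonneg z]
  have hz0 : z ≠ 0 := by
    intro h; rw [h] at hzabs; simp at hzabs
  set a : ℝ := Complex.arg z with hadef
  have hca : Real.cos a = g₁ 0 := by
    rw [hadef, Complex.cos_arg hz0, hzabs]
    simp [hzdef]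
  have hsa : Real.sin a = g₂ 0 := by
    rw [hadef, Complex.sin_arg, hzabs]
    simp [hzdef]
  -- the angle function
  set θ : ℝ → ℝ := fun t => a + ∫ s in (0 : ℝ)..t, w s with hθdef
  have hθd : ∀ t, HasDerivAt θ (w t) t := by
    intro t
    exact ((hwcont.integral_hasStrictDerivAt 0 t).hasDerivAt).const_add a
  have hθc : Continuous θ := continuous_iff_continuousAt.mpr fun t => (hθd t).continuousAt
  have hθ0 : θ 0 = a := by simp [hθdef]
  -- F = g · (cos θ, sin θ) is constant 1
  set F : ℝ → ℝ := fun t => g₁ t * Real.cos (θ t) + g₂ t * Real.sin (θ t) with hFdef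
  have hFd : ∀ t, HasDerivAt F 0 t := by
    intro t
    have h1 : HasDerivAt (fun t => Real.cos (θ t)) (-Real.sin (θ t) * w t) t := (hθd t).cos
    have h2 : HasDerivAt (fun t => Real.sin (θ t)) (Real.cos (θ t) * w t) t := (hθd t).sin
    have h3 := ((hg₁' t).fun_mul h1).fun_add ((hg₂' t).fun_mul h2)
    refine h3.congr_deriv (Eq.symm ?_)
    have ho := horth t
    have hc := hcirc t
    simp only [hwdef]
    linear_combination (-(Real.cos (θ t) * g₁ t + Real.sin (θ t) * g₂ t)) * ho +
      (Real.cos (θ t) * deriv g₁ t + Real.sin (θ t) * deriv g₂ t) * hc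
  have hF1 : ∀ t, F t = 1 := by
    intro t
    have hFdiff : Differentiable ℝ F := fun s => (hFd s).differentiableAt
    have hconst : F t = F 0 :=
      is_const_of_deriv_eq_zero hFdiff (fun s => (hFd s).deriv) t 0
    rw [hconst, hFdef]
    simp only [hθ0]
    rw [hca, hsa]
    have := hcirc 0; nlinarith
  have hkey : ∀ t, g₁ t = Real.cos (θ t) ∧ g₂ t = Real.sin (θ t) := by
    intro t
    have h1 := hcirc t
    have h2 := hF1 t
    rw [hFdef] at h2
    simp only at h2
    have h3 := Real.sin_sq_add_cos_sq (θ t)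
    have hsum : (g₁ t - Real.cos (θ t)) ^ 2 + (g₂ t - Real.sin (θ t)) ^ 2 = 0 := by
      linear_combination h1 + h3 - 2 * h2
    have hz1 : (g₁ t - Real.cos (θ t)) ^ 2 = 0 := by
      nlinarith [sq_nonneg (g₁ t - Real.cos (θ t)), sq_nonneg (g₂ t - Real.sin (θ t))]
    have hz2 : (g₂ t - Real.sin (θ t)) ^ 2 = 0 := by
      nlinarith [sq_nonneg (g₁ t - Real.cos (θ t)), sq_nonneg (g₂ t - Real.sin (θ t))]
    constructor
    · have := pow_eq_zero_iff (n := 2) (by norm_num) |>.mp hz1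
      linarith [sub_eq_zero.mp this]
    · have := pow_eq_zero_iff (n := 2) (by norm_num) |>.mp hz2
      linarith [sub_eq_zero.mp this]
  -- antiperiodicity of the angle
  have hD : ∀ t, ∃ n : ℤ, θ (t + 1 / 2) - θ t - π = 2 * π * n := by
    intro t
    have hc : Real.cos (θ (t + 1 / 2)) = Real.cos (θ t + π) := by
      rw [Real.cos_add_pi, ← (hkey (t + 1 / 2)).1, ← (hkey t).1]
      exact (hanti t).1
    have hs : Real.sin (θ (t + 1 / 2)) = Real.sin (θ t + π) := by
      rw [Real.sin_add_pi, ← (hkey (t + 1 / 2)).2, ← (hkey t).2]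
      exact (hanti t).2
    obtain ⟨n, hn⟩ := cos_sin_eq_aux _ _ hc hs
    exact ⟨n, by linarith⟩
  -- the jump is constant
  set f : ℝ → ℝ := fun t => (θ (t + 1 / 2) - θ t - π) / (2 * π) with hfdef
  have hfc : Continuous f := by
    apply Continuous.div_const
    exact ((hθc.comp (continuous_id.add continuous_const)).sub hθc).sub continuous_const
  have h2π : (2 * π) ≠ 0 := by positivity
  have hfint : ∀ t, ∃ n : ℤ, f t = n := by
    intro t
    obtain ⟨n, hn⟩ := hD t
    refine ⟨n, ?_⟩
    show (θ (t + 1 / 2) - θ t - π) / (2 * π) = n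
    rw [hn]
    field_simp
  have hfconst := const_of_int_valued f hfc hfint
  obtain ⟨n₀, hn₀⟩ := hfint 0
  have hjump : ∀ t, θ (t + 1 / 2) - θ t = π + 2 * π * n₀ := by
    intro t
    have h1 : f t = (n₀ : ℝ) := by rw [hfconst t, hn₀]
    have h2 : θ (t + 1 / 2) - θ t - π = (n₀ : ℝ) * (2 * π) := (div_eq_iff h2π).mp h1
    linarith
  -- conclude
  have hint : (∫ t in (0 : ℝ)..1, w t) = θ 1 - θ 0 := by
    rw [hθdef]
    simp
  have h01 : θ 1 - θ 0 = 2 * (2 * n₀ + 1) * π := by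
    have e1 := hjump 0
    have e2 := hjump (1 / 2)
    rw [show (0 : ℝ) + 1 / 2 = 1 / 2 by norm_num] at e1
    rw [show (1 : ℝ) / 2 + 1 / 2 = 1 by norm_num] at e2
    linear_combination e1 + e2
  have hfinal : (∫ t in (0 : ℝ)..1, w t) = 2 * ((2 * n₀ + 1 : ℤ) : ℝ) * π := by
    rw [hint, h01]; push_cast; ring
  constructor
  · exact ⟨2 * n₀ + 1, ⟨n₀, by ring⟩, hfinal⟩
  · rw [hfinal]
    have : ((2 * n₀ + 1 : ℤ) : ℝ) ≠ 0 := by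
      exact_mod_cast (by omega : (2 * n₀ + 1 : ℤ) ≠ 0)
    positivity
end
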